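/- arXiv:2309.06979 — 2 statements merged into one kernel-verified Lean document; each statement's English description precedes it below -/
import Mathlib

section
/- There exists a constant C > 0 such that for every n ≥ 2 and every subset A ⊆ [n], there exist T ≤ C·log₂(n) and a linear AR hypothesis h ∈ ℋ^Lin such that h^{(T)}(x) = χ_A(x) for all x ∈ {0,1}^n. That is, the class 𝒫_n of all parity functions on {0,1}^n can be computed by ℋ^Lin with length complexity O(log n). -/
/- STATEMENT 5: The class `𝒫_n` of all parity functions on `{0,1}^n` can be computed
by linear AR hypotheses with length complexity `O(log n)`. -/

/-- The embedding of the token alphabet `{0,1}` as the reals `0, 1`. -/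
def bEmb (b : Bool) : ℝ := if b then 1 else 0

/-- A linear AR hypothesis `h ∈ ℋ^Lin`: for each step `t` (`0`-indexed, so the context
has `n + t` coordinates) and each token `d ∈ {0,1}`, a weight vector on the `n` input
coordinates (`Wx`) and on the `t` previously generated tokens (`Wz`). -/
structure LinAR (n : ℕ) where
  Wx : ℕ → Bool → Fin n → ℝ
  Wz : (t : ℕ) → Bool → Fin t → ℝ

/-- The score `⟨W_{t,d}, (x, z)⟩` of token `d` at step `t` on context `(x, z)`. -/
def LinAR.score {n : ℕ} (h : LinAR n) (t : ℕ) (d : Bool) (x : Fin n → Bool)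
    (z : Fin t → Bool) : ℝ :=
  (∑ i, h.Wx t d i * bEmb (x i)) + ∑ j, h.Wz t d j * bEmb (z j)

/-- The output of the linear AR hypothesis on context `(x, z)`:
`argmax_{d ∈ {0,1}} ⟨W_{t,d}, (x,z)⟩`, ties broken toward `0`. -/
noncomputable def LinAR.step {n : ℕ} (h : LinAR n) (t : ℕ) (x : Fin n → Bool)
    (z : Fin t → Bool) : Bool :=
  decide (h.score t false x z < h.score t true x z)

/-- The rollout of the linear AR hypothesis: `h.rollout x t = h^{(t+1)}(x)`, i.e.
`h^{(1)}(x) = h.rollout x 0` and `h^{(t)}(x) = h(x, (h^{(1)}(x), …, h^{(t-1)}(x)))`. -/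
noncomputable def LinAR.rollout {n : ℕ} (h : LinAR n) (x : Fin n → Bool) (t : ℕ) : Bool :=
  h.step t x fun s : Fin t => h.rollout x s.val
  termination_by t
  decreasing_by exact s.isLt

/-- The parity function `χ_A(x) = Σ_{i ∈ A} x_i mod 2` over the subset `A ⊆ [n]`. -/
def parityFn {n : ℕ} (A : Finset (Fin n)) (x : Fin n → Bool) : Bool :=
  decide ((∑ i ∈ A, (x i).toNat) % 2 = 1)

/-!
A linear AR hypothesis can write out the binary expansion of `S = ∑_{i ∈ A} xᵢ < 2 ^ L`,
`L = ⌊log₂ n⌋ + 1`, most significant digit first. Before the digit of weight `2 ^ k` is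
emitted, the digits already written make up `S - S mod 2 ^ (k + 1)`, so a linear score can form
`2 (S mod 2 ^ (k + 1)) - (2 ^ (k + 1) - 1)`, which is positive exactly when that digit is `1`.
The constant term is supplied by a preliminary token `[S > 0]` (if `S = 0` all scores vanish
and all digits are `0`). The last digit written is the parity `S mod 2`.
-/

open Finset

lemma bEmb_eq_toNat (b : Bool) : bEmb b = b.toNat := by
  cases b <;> simp [bEmb]

lemma bEmb_decide_mod_two_eq_one (m : ℕ) : bEmb (decide (m % 2 = 1)) = (m % 2 : ℕ) := by
  rcases Nat.mod_two_eq_zero_or_one m with h | h <;> simp [h, bEmb]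

namespace LinAR

variable {n : ℕ}

theorem rollout_eq_of_step (h : LinAR n) (x : Fin n → Bool) {b : ℕ → Bool} {T : ℕ}
    (hb : ∀ t ≤ T, h.step t x (fun s => b s) = b t) : ∀ t ≤ T, h.rollout x t = b t := by
  intro t
  induction t using Nat.strong_induction_on with
  | _ t ih =>
    intro ht
    rw [rollout, ← hb t ht]
    congr 1
    funext s
    exact ih s s.isLt (by omega)

end LinAR

def weightedSum {n : ℕ} (c : Fin n → ℕ) (x : Fin n → Bool) : ℕ :=
  ∑ i, c i * (x i).toNat

lemma cast_weightedSum {n : ℕ} (c : Fin n → ℕ) (x : Fin n → Bool) :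
    ((weightedSum c x : ℕ) : ℝ) = ∑ i, (c i : ℝ) * bEmb (x i) := by
  simp [weightedSum, bEmb_eq_toNat]

/-- Token `t + 1` is the digit of weight `2 ^ (L - (t + 1))`, so tokens `1, …, L` spell out
`S < 2 ^ L` from the most significant digit down. -/
def topDigits (S L : ℕ) : ℕ → Bool
  | 0 => decide (0 < S)
  | t + 1 => decide (S / 2 ^ (L - (t + 1)) % 2 = 1)

lemma sum_high_digits_add_mod_two_pow {S L t : ℕ} (hS : S < 2 ^ L) (ht : t ≤ L) :
    ∑ j ∈ range t, 2 ^ (L - (j + 1)) * (S / 2 ^ (L - (j + 1)) % 2) + S % 2 ^ (L - t) = S := by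
  induction t with
  | zero => simpa using Nat.mod_eq_of_lt hS
  | succ t ih =>
    have hexp : L - t = L - (t + 1) + 1 := by omega
    rw [hexp, Nat.mod_pow_succ] at ih
    rw [sum_range_succ]
    omega

def binaryDigitsAR {n : ℕ} (c : Fin n → ℕ) (L : ℕ) : LinAR n where
  Wx t d i := if d then (if t = 0 then 1 else 2) * c i else 0
  Wz t d j := if d then (if (j : ℕ) = 0 then 1 - 2 ^ (L - t + 1) else -2 * 2 ^ (L - j)) else 0

section binaryDigitsAR

variable {n : ℕ} (c : Fin n → ℕ) (L : ℕ) (x : Fin n → Bool)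

lemma binaryDigitsAR_score_false (t : ℕ) (z : Fin t → Bool) :
    (binaryDigitsAR c L).score t false x z = 0 := by
  simp [LinAR.score, binaryDigitsAR]

lemma binaryDigitsAR_score_zero (z : Fin 0 → Bool) :
    (binaryDigitsAR c L).score 0 true x z = weightedSum c x := by
  simp [LinAR.score, binaryDigitsAR, cast_weightedSum]

lemma binaryDigitsAR_score_succ {t : ℕ} (hS : weightedSum c x < 2 ^ L) (ht : t + 1 ≤ L) :
    (binaryDigitsAR c L).score (t + 1) true x (fun s => topDigits (weightedSum c x) L s) =
      2 * (weightedSum c x % 2 ^ (L - t) : ℕ) +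
        (1 - 2 ^ (L - t)) * bEmb (decide (0 < weightedSum c x)) := by
  set S := weightedSum c x
  have hsum := sum_high_digits_add_mod_two_pow hS (Nat.le_of_succ_le ht)
  have hexp : L - (t + 1) + 1 = L - t := by omega
  have hinput : ∑ i, (2 * (c i : ℝ)) * bEmb (x i) = 2 * S := by
    simp only [mul_assoc, ← mul_sum, cast_weightedSum, S]
  have hdigits : ∑ j : Fin t, -2 * (2 : ℝ) ^ (L - (j + 1)) *
      bEmb (decide (S / 2 ^ (L - (j + 1)) % 2 = 1)) = -2 * (S - (S % 2 ^ (L - t) : ℕ)) := by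
    have hsum' : ∑ j ∈ range t, (2 : ℝ) ^ (L - (j + 1)) * (S / 2 ^ (L - (j + 1)) % 2 : ℕ) +
        (S % 2 ^ (L - t) : ℕ) = S := by
      exact_mod_cast hsum
    rw [← eq_sub_of_add_eq hsum', mul_sum, Fin.sum_univ_eq_sum_range (fun j => -2 *
      (2 : ℝ) ^ (L - (j + 1)) * bEmb (decide (S / 2 ^ (L - (j + 1)) % 2 = 1)))]
    refine sum_congr rfl fun j _ => ?_
    rw [bEmb_decide_mod_two_eq_one]
    ring
  simp only [LinAR.score, binaryDigitsAR, if_true, Nat.succ_ne_zero, if_false,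
    Fin.sum_univ_succ, Fin.val_zero, Fin.val_succ, topDigits, hexp, hinput, hdigits]
  ring

lemma zero_lt_digit_score_iff (S k : ℕ) :
    (0 : ℝ) < 2 * (S % 2 ^ (k + 1) : ℕ) + (1 - 2 ^ (k + 1)) * bEmb (decide (0 < S)) ↔
      S / 2 ^ k % 2 = 1 := by
  rcases Nat.eq_zero_or_pos S with rfl | hS
  · simp [bEmb]
  · have hlow : ((S % 2 ^ k : ℕ) : ℝ) + 1 ≤ 2 ^ k := by
      exact_mod_cast Nat.mod_lt S (by positivity : 0 < 2 ^ k)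
    rw [decide_eq_true hS, bEmb, if_pos rfl, Nat.mod_pow_succ, pow_succ]
    rcases Nat.mod_two_eq_zero_or_one (S / 2 ^ k) with h | h <;> simp only [h] <;> push_cast
    · simp only [iff_false, not_lt]
      linarith
    · simp only [iff_true]
      ring_nf
      positivity

lemma binaryDigitsAR_step (hS : weightedSum c x < 2 ^ L) (t : ℕ) (ht : t ≤ L) :
    (binaryDigitsAR c L).step t x (fun s => topDigits (weightedSum c x) L s) =
      topDigits (weightedSum c x) L t := by
  rw [LinAR.step, binaryDigitsAR_score_false]
  cases t with
  | zero => simp [binaryDigitsAR_score_zero, topDigits]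
  | succ t =>
    have hexp : L - t = L - (t + 1) + 1 := by omega
    rw [binaryDigitsAR_score_succ c L x hS ht, topDigits, decide_eq_decide, hexp]
    exact zero_lt_digit_score_iff _ _

theorem binaryDigitsAR_rollout_last (hS : weightedSum c x < 2 ^ L) (hL : 0 < L) :
    (binaryDigitsAR c L).rollout x L = decide (weightedSum c x % 2 = 1) := by
  obtain ⟨L, rfl⟩ := Nat.exists_eq_add_one_of_ne_zero hL.ne'
  rw [LinAR.rollout_eq_of_step _ x (binaryDigitsAR_step c _ x hS) _ le_rfl, topDigits]
  simp

end binaryDigitsAR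

lemma weightedSum_indicator {n : ℕ} (A : Finset (Fin n)) (x : Fin n → Bool) :
    weightedSum (fun i => if i ∈ A then 1 else 0) x = ∑ i ∈ A, (x i).toNat := by
  simp [weightedSum, ite_mul, sum_ite_mem]

lemma sum_toNat_lt_two_pow_succ_log {n : ℕ} (A : Finset (Fin n)) (x : Fin n → Bool) :
    ∑ i ∈ A, (x i).toNat < 2 ^ (Nat.log 2 n + 1) :=
  calc ∑ i ∈ A, (x i).toNat ≤ #A := by
        simpa using sum_le_card_nsmul A _ 1 fun i _ => Bool.toNat_le (x i)
    _ ≤ n := by simpa using card_le_univ A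
    _ < 2 ^ (Nat.log 2 n + 1) := Nat.lt_pow_succ_log_self (by norm_num) n

/-- There is a constant `C > 0` such that for every `n ≥ 2` and every
subset `A ⊆ [n]` there exist `T ≤ C · log₂ n` and a linear AR hypothesis `h ∈ ℋ^Lin`
with `h^{(T)}(x) = χ_A(x)` for all `x ∈ {0,1}^n` (here `h^{(T)} = h.rollout · (T-1)`):
`𝒫_n` is computed by `ℋ^Lin` with length complexity `O(log n)`. -/
theorem linAR_computes_parities_log_length :
    ∃ C : ℕ, 0 < C ∧
      ∀ n : ℕ, 2 ≤ n → ∀ A : Finset (Fin n),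
        ∃ T : ℕ, 0 < T ∧ T ≤ C * Nat.log 2 n ∧
          ∃ h : LinAR n, ∀ x : Fin n → Bool, h.rollout x (T - 1) = parityFn A x := by
  refine ⟨3, by norm_num, fun n hn A => ?_⟩
  have hlog : 1 ≤ Nat.log 2 n := Nat.le_log_of_pow_le (by norm_num) (by simpa using hn)
  set L := Nat.log 2 n + 1
  refine ⟨L + 1, by omega, by omega, binaryDigitsAR (fun i => if i ∈ A then 1 else 0) L,
    fun x => ?_⟩
  have hS := weightedSum_indicator A x ▸ sum_toNat_lt_two_pow_succ_log A x
  rw [Nat.add_sub_cancel, binaryDigitsAR_rollout_last _ L x hS (Nat.succ_pos _),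
    weightedSum_indicator, parityFn]
end

section
/- Let k ≥ 1 and let S_1, …, S_T define an AR parity computation of fan-in k and length T on {0,1}^n. If the final token computes the full parity, i.e., z_T(x) = χ_{[n]}(x) = Σ_{i=1}^n x_i mod 2 for all x ∈ {0,1}^n, then T > n/(2k). Hence computing 𝒫_n by AR hypotheses whose steps are parities of fan-in at most k requires length complexity Ω(n/k). -/
/-- The tokens of an AR parity computation given by the subsets `S 0, S 1, …`
(`0`-indexed: the `(t+1)`-st token `z_{t+1}` is `arZ n S x t`, computed from the
subset `S t ⊆ [n + t]`): `arZ n S x t = Σ_{i ∈ S t} u_i mod 2` where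
`u = (x_0, …, x_{n-1}, arZ n S x 0, …, arZ n S x (t-1))`. Coordinates `i < n` are
input coordinates and coordinates `n + s` with `s < t` are token coordinates
(out-of-range coordinates are read as `0`). -/
def arZ (n : ℕ) (S : ℕ → Finset ℕ) (x : Fin n → Bool) (t : ℕ) : Bool :=
  decide ((((S t).sum fun i =>
      if h : i < n then (x ⟨i, h⟩).toNat
      else if h2 : i - n < t then (arZ n S x (i - n)).toNat else 0) % 2) = 1)
termination_by t
decreasing_by all_goals exact h2

/-- If coordinate `i` never appears in any `S t` for `t < T`, then the tokens
do not depend on `x i`. -/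
lemma arZ_congr (n : ℕ) (S : ℕ → Finset ℕ) (T : ℕ) (i : Fin n)
    (hi : ∀ t < T, (i : ℕ) ∉ S t) (x y : Fin n → Bool)
    (hxy : ∀ j : Fin n, j ≠ i → x j = y j) :
    ∀ t < T, arZ n S x t = arZ n S y t := by
  intro t
  induction t using Nat.strong_induction_on with
  | _ t ih =>
    intro htT
    rw [arZ, arZ]
    have hs : ((S t).sum fun j =>
        if h : j < n then (x ⟨j, h⟩).toNat
        else if h2 : j - n < t then (arZ n S x (j - n)).toNat else 0)
        = ((S t).sum fun j =>
        if h : j < n then (y ⟨j, h⟩).toNat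
        else if h2 : j - n < t then (arZ n S y (j - n)).toNat else 0) := by
      apply Finset.sum_congr rfl
      intro j hj
      by_cases h : j < n
      · simp only [dif_pos h]
        congr 1
        apply hxy
        intro hji
        apply hi t htT
        have : (i : ℕ) = j := by rw [← hji]
        rwa [this]
      · simp only [dif_neg h]
        by_cases h2 : j - n < t
        · simp only [dif_pos h2]
          rw [ih (j - n) h2 (lt_trans h2 htT)]
        · simp only [dif_neg h2]
    rw [hs]

/-- Let `k ≥ 1` and let `S` define an AR parity computation of fan-in
`k` and length `T` on `{0,1}^n` (each `S t ⊆ [n + t]` with `|S t| ≤ k`). If the final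
token computes the full parity, i.e. `z_T(x) = χ_{[n]}(x)` for all `x ∈ {0,1}^n`, then
`T > n/(2k)`, i.e. `n < 2kT`. Hence computing `𝒫_n` by AR hypotheses whose steps are
parities of fan-in at most `k` requires length complexity `Ω(n/k)`. -/
theorem ar_parity_lower_bound (n k T : ℕ) (hk : 1 ≤ k) (hT : 0 < T)
    (S : ℕ → Finset ℕ)
    (hS : ∀ t < T, S t ⊆ Finset.range (n + t))
    (hcard : ∀ t < T, (S t).card ≤ k)
    (hfull : ∀ x : Fin n → Bool, arZ n S x (T - 1) = parityFn Finset.univ x) :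
    n < 2 * k * T := by
  -- It suffices to show n ≤ k * T
  have hkT : 1 ≤ k * T := Nat.one_le_iff_ne_zero.mpr (by positivity)
  suffices hn : n ≤ k * T by nlinarith
  by_contra hn
  push_neg at hn
  -- the union of all S t for t < T has cardinality ≤ k*T < n
  set U : Finset ℕ := (Finset.range T).biUnion S with hU
  have hUcard : U.card ≤ k * T := by
    calc U.card ≤ ∑ t ∈ Finset.range T, (S t).card := Finset.card_biUnion_le
      _ ≤ ∑ _t ∈ Finset.range T, k := by
          apply Finset.sum_le_sum
          intro t ht
          exact hcard t (Finset.mem_range.mp ht)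
      _ = T * k := by simp [Finset.sum_const, mul_comm]
      _ = k * T := mul_comm T k
  -- find an input coordinate not in U
  have himg : (Finset.univ.image (fun i : Fin n => (i : ℕ))).card = n := by
    rw [Finset.card_image_of_injective _ Fin.val_injective, Finset.card_univ, Fintype.card_fin]
  have hex : ∃ i : Fin n, (i : ℕ) ∉ U := by
    by_contra hall
    push_neg at hall
    have hsub : (Finset.univ.image (fun i : Fin n => (i : ℕ))) ⊆ U := by
      intro m hm
      obtain ⟨i, _, rfl⟩ := Finset.mem_image.mp hm
      exact hall i
    have := Finset.card_le_card hsub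
    omega
  obtain ⟨i, hi⟩ := hex
  have hinot : ∀ t < T, (i : ℕ) ∉ S t := by
    intro t ht hmem
    exact hi (Finset.mem_biUnion.mpr ⟨t, Finset.mem_range.mpr ht, hmem⟩)
  -- flip coordinate i
  set x : Fin n → Bool := fun _ => false with hx
  set y : Fin n → Bool := Function.update x i true with hy
  have heq : arZ n S x (T - 1) = arZ n S y (T - 1) := by
    apply arZ_congr n S T i hinot x y _ (T - 1) (by omega)
    intro j hj
    simp [hy, Function.update_of_ne hj]
  have hpx : parityFn Finset.univ x = false := by
    simp [parityFn, hx]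
  have hpy : parityFn Finset.univ y = true := by
    have hsum : ∑ j : Fin n, (y j).toNat = 1 := by
      rw [Fintype.sum_eq_single i]
      · simp [hy]
      · intro j hj
        simp [hy, hx, Function.update_of_ne hj]
    simp [parityFn, hsum]
  rw [hfull x, hfull y, hpx, hpy] at heq
  exact Bool.false_ne_true heq
end
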